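/- Let j ≥ 0, {Q_λ} the grid of cubes of side 2^j in ℝ^{n+1}, writing Q_λ = Q_{λ(x)} × Q_{λ(t)} with Q_{λ(x)} ⊂ ℝ^n and Q_{λ(t)} ⊂ ℝ. If 1 ≤ q, r ≤ 2, then (Σ_λ ‖F χ_{Q_λ}‖₁²)^{1/2} ≤ C 2^{j(n/r' + 1/q')} ‖F‖_{L^q_t L^r_x}, where r', q' are conjugate exponents. -/

import Mathlib

open MeasureTheory ENNReal

noncomputable section

/-- A cube in `ℝⁿ` with center `c` and side length `r`. -/
def cube (n : ℕ) (c : EuclideanSpace ℝ (Fin n)) (r : ℝ) : Set (EuclideanSpace ℝ (Fin n)) :=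
  {x | ∀ i, |x i - c i| ≤ r / 2}

/-- A cube in space-time `ℝⁿ × ℝ ≅ ℝ^{n+1}` with center `(c, τ)` and side length `r`. -/
def cubeP (n : ℕ) (c : EuclideanSpace ℝ (Fin n)) (τ r : ℝ) :
    Set (EuclideanSpace ℝ (Fin n) × ℝ) :=
  (cube n c r) ×ˢ Set.Icc (τ - r / 2) (τ + r / 2)

/-- The cube of the grid `{Q_λ}_{λ ∈ 2^j ℤ^{n+1}}` of side `s` centered at the lattice
point `2^j λ`, for `λ ∈ ℤ^{n+1} ≅ ℤⁿ × ℤ`. -/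
def gridCube (n j : ℕ) (l : (Fin n → ℤ) × ℤ) (s : ℝ) :
    Set (EuclideanSpace ℝ (Fin n) × ℝ) :=
  cubeP n (WithLp.toLp 2 (fun i : Fin n => (2 : ℝ) ^ j * (l.1 i : ℝ))) ((2 : ℝ) ^ j * (l.2 : ℝ)) s

/-- The Morrey–Campanato norm on `ℝ^{n+1}`. -/
def morreyNormP (n : ℕ) (α p : ℝ) (w : EuclideanSpace ℝ (Fin n) × ℝ → ℝ) : ℝ≥0∞ :=
  ⨆ (c : EuclideanSpace ℝ (Fin n)) (τ : ℝ) (r : ℝ) (_ : 0 < r),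
    ENNReal.ofReal (r ^ α) * (ENNReal.ofReal (r ^ ((n : ℝ) + 1)))⁻¹ ^ (1 / p) *
      (∫⁻ z in cubeP n c τ r, ENNReal.ofReal (|w z| ^ p)) ^ (1 / p)

/-- The mixed norm `‖F‖_{L^q_t L^r_x} = (∫ (∫ |F(x,t)|^r dx)^{q/r} dt)^{1/q}`. -/
def mixedNorm (n : ℕ) (q r : ℝ) (F : EuclideanSpace ℝ (Fin n) × ℝ → ℂ) : ℝ≥0∞ :=
  (∫⁻ t : ℝ, ((∫⁻ x : EuclideanSpace ℝ (Fin n), (‖F (x, t)‖₊ : ℝ≥0∞) ^ r) ^ (1 / r)) ^ q) ^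
    (1 / q)

/-!
On a cube `Q = A × I` of side `s`, Hölder in `x` and then in `t` bounds `‖F χ_Q‖₁` by
`s^{n/r'} s^{1/q'} ‖F‖_{L^q(I; L^r(A))}`. It remains to see that the `ℓ²` sum over the grid of the
local mixed norms is at most the global one. Since `2/q ≥ 1`, `ℓ¹ ⊆ ℓ^{2/q}` handles the sum over
the time intervals; Minkowski's integral inequality in `ℓ^{2/q}` moves the sum over the spatial
cubes inside the time integral, where `ℓ¹ ⊆ ℓ^{2/r}` handles it. The function `F` need not be
measurable, so it is first replaced by a measurable minorant with the same integral on every cube.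
-/

namespace ENNReal

theorem rpow_sub_one_mul_self (a : ℝ≥0∞) {p : ℝ} (hp : 1 ≤ p) : a ^ (p - 1) * a = a ^ p := by
  conv_rhs => rw [← sub_add_cancel p 1,
    ENNReal.rpow_add_of_nonneg _ _ (by linarith) zero_le_one, ENNReal.rpow_one]

theorem tsum_rpow_le_rpow_tsum {ι : Type*} (f : ι → ℝ≥0∞) {p : ℝ} (hp : 1 ≤ p) :
    ∑' i, f i ^ p ≤ (∑' i, f i) ^ p :=
  calc ∑' i, f i ^ p ≤ ∑' i, (∑' i, f i) ^ (p - 1) * f i := by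
        refine ENNReal.tsum_le_tsum fun i => ?_
        rw [← rpow_sub_one_mul_self _ hp]
        gcongr
        exact ENNReal.le_tsum i
    _ = (∑' i, f i) ^ p := by rw [ENNReal.tsum_mul_left, rpow_sub_one_mul_self _ hp]

theorem le_rpow_of_le_rpow_one_div_mul {S R : ℝ≥0∞} {p q : ℝ} (hpq : p.HolderConjugate q)
    (hS : S ≠ ⊤) (h : S ≤ S ^ (1 / q) * R) : S ≤ R ^ p := by
  rcases eq_or_ne S 0 with rfl | hS0
  · exact zero_le
  have hsplit : S ^ (1 / q) * S ^ (1 / p) = S := by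
    rw [← ENNReal.rpow_add _ _ hS0 hS, one_div, one_div, add_comm, hpq.inv_add_inv_eq_one,
      ENNReal.rpow_one]
  have hroot : S ^ (1 / p) ≤ R :=
    (ENNReal.mul_le_mul_iff_right (ENNReal.rpow_pos (pos_iff_ne_zero.mpr hS0) hS).ne'
      (ENNReal.rpow_ne_top_of_nonneg (one_div_nonneg.mpr hpq.symm.nonneg) hS)).mp
      (hsplit.trans_le h)
  calc S = (S ^ (1 / p)) ^ p := by rw [← ENNReal.rpow_mul, one_div_mul_cancel hpq.ne_zero,
        ENNReal.rpow_one]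
    _ ≤ R ^ p := by gcongr; exact hpq.nonneg

end ENNReal

open scoped Function

namespace MeasureTheory

variable {α : Type*} [MeasurableSpace α] {μ : Measure α}

theorem lintegral_le_measure_univ_rpow_mul {g : α → ℝ≥0∞} (hg : AEMeasurable g μ) {p : ℝ}
    (hp : 1 ≤ p) : ∫⁻ a, g a ∂μ ≤ μ Set.univ ^ (1 - 1 / p) * (∫⁻ a, g a ^ p ∂μ) ^ (1 / p) := by
  simpa [eLpNorm'_eq_lintegral_enorm, mul_comm] using
    eLpNorm'_le_eLpNorm'_mul_rpow_measure_univ one_pos hp hg.aestronglyMeasurable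

theorem tsum_setLIntegral_rpow_le {ι : Type*} [Countable ι] {s : ι → Set α}
    (hs : ∀ i, NullMeasurableSet (s i) μ) (hd : Pairwise (AEDisjoint μ on s)) (f : α → ℝ≥0∞)
    {p : ℝ} (hp : 1 ≤ p) : ∑' i, (∫⁻ a in s i, f a ∂μ) ^ p ≤ (∫⁻ a, f a ∂μ) ^ p := by
  refine (ENNReal.tsum_rpow_le_rpow_tsum _ hp).trans ?_
  gcongr
  rw [← lintegral_iUnion₀ hs hd]
  exact setLIntegral_le_lintegral _ _

/-- Minkowski's integral inequality in `ℓ^p(L)`, proved by testing against the dual sequence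
`(∫ w i)^(p-1)`. -/
theorem sum_lintegral_rpow_le {ι : Type*} (L : Finset ι) {w : ι → α → ℝ≥0∞}
    (hw : ∀ i, AEMeasurable (w i) μ) {p : ℝ} (hp : 1 ≤ p) :
    ∑ i ∈ L, (∫⁻ a, w i a ∂μ) ^ p ≤ (∫⁻ a, (∑ i ∈ L, w i a ^ p) ^ (1 / p) ∂μ) ^ p := by
  rcases hp.eq_or_lt with rfl | hp1
  · simp [lintegral_finsetSum' L fun i _ => hw i]
  set R := ∫⁻ a, (∑ i ∈ L, w i a ^ p) ^ (1 / p) ∂μ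
  rcases eq_or_ne R ⊤ with hR | hR
  · simp [hR, ENNReal.top_rpow_of_pos (by linarith : 0 < p)]
  set T := fun i => ∫⁻ a, w i a ∂μ
  have hT : ∀ i ∈ L, T i ≤ R := fun i hi => lintegral_mono fun a => by
    calc w i a = (w i a ^ p) ^ (1 / p) := by
          rw [← ENNReal.rpow_mul, mul_one_div_cancel (by linarith), ENNReal.rpow_one]
      _ ≤ (∑ i ∈ L, w i a ^ p) ^ (1 / p) := by
          gcongr
          exact Finset.single_le_sum (f := fun i => w i a ^ p) (fun i _ => zero_le) hi
  have hS : ∑ i ∈ L, T i ^ p ≠ ⊤ := ENNReal.sum_ne_top.mpr fun i hi =>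
    ENNReal.rpow_ne_top_of_nonneg (by linarith) (ne_top_of_le_ne_top hR (hT i hi))
  have hpq := Real.HolderConjugate.conjExponent hp1
  refine ENNReal.le_rpow_of_le_rpow_one_div_mul hpq hS ?_
  calc ∑ i ∈ L, T i ^ p = ∫⁻ a, ∑ i ∈ L, T i ^ (p - 1) * w i a ∂μ := by
        rw [lintegral_finsetSum' L fun i _ => (hw i).const_mul _]
        refine Finset.sum_congr rfl fun i _ => ?_
        rw [lintegral_const_mul'' _ (hw i), ENNReal.rpow_sub_one_mul_self _ hp]
    _ ≤ ∫⁻ a, (∑ i ∈ L, (T i ^ (p - 1)) ^ p.conjExponent) ^ (1 / p.conjExponent) *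
          (∑ i ∈ L, w i a ^ p) ^ (1 / p) ∂μ :=
        lintegral_mono fun a => ENNReal.inner_le_Lp_mul_Lq L _ _ hpq.symm
    _ = (∑ i ∈ L, T i ^ p) ^ (1 / p.conjExponent) * R := by
        simp_rw [← ENNReal.rpow_mul, hpq.sub_one_mul_conj]
        exact lintegral_const_mul' _ _
          (ENNReal.rpow_ne_top_of_nonneg (one_div_nonneg.mpr hpq.symm.nonneg) hS)

theorem tsum_lintegral_rpow_le {ι : Type*} {w : ι → α → ℝ≥0∞} (hw : ∀ i, AEMeasurable (w i) μ)
    {p : ℝ} (hp : 1 ≤ p) :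
    ∑' i, (∫⁻ a, w i a ∂μ) ^ p ≤ (∫⁻ a, (∑' i, w i a ^ p) ^ (1 / p) ∂μ) ^ p := by
  rw [ENNReal.tsum_eq_iSup_sum]
  refine iSup_le fun L => (sum_lintegral_rpow_le L hw hp).trans ?_
  gcongr
  exact ENNReal.sum_le_tsum L

end MeasureTheory

/-- `mixedLIntegral μ ν q r G` is the `q`-th power of the `L^q_ν L^r_μ` norm of `G`. -/
def mixedLIntegral {α β : Type*} [MeasurableSpace α] [MeasurableSpace β] (μ : Measure α)
    (ν : Measure β) (q r : ℝ) (G : α × β → ℝ≥0∞) : ℝ≥0∞ :=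
  ∫⁻ t, (∫⁻ x, G (x, t) ^ r ∂μ) ^ (q / r) ∂ν

section MixedLIntegral

variable {α β : Type*} [MeasurableSpace α] [MeasurableSpace β] {μ : Measure α} {ν : Measure β}
  [SFinite μ] {G : α × β → ℝ≥0∞} {q r : ℝ}

theorem setLIntegral_prod_le_mixedLIntegral [SFinite ν] (hG : Measurable G) (hq : 1 ≤ q)
    (hr : 1 ≤ r) (A : Set α) (I : Set β) :
    ∫⁻ z in A ×ˢ I, G z ∂μ.prod ν ≤ μ A ^ (1 - 1 / r) * ν I ^ (1 - 1 / q) *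
      mixedLIntegral (μ.restrict A) (ν.restrict I) q r G ^ (1 / q) := by
  set K := fun t => ∫⁻ x in A, G (x, t) ^ r ∂μ
  have hK : Measurable K := (hG.pow_const r).lintegral_prod_left'
  calc ∫⁻ z in A ×ˢ I, G z ∂μ.prod ν = ∫⁻ t in I, ∫⁻ x in A, G (x, t) ∂μ ∂ν := by
        rw [← Measure.prod_restrict, lintegral_prod_symm _ hG.aemeasurable]
    _ ≤ ∫⁻ t in I, μ A ^ (1 - 1 / r) * K t ^ (1 / r) ∂ν := lintegral_mono fun t => by
        simpa using lintegral_le_measure_univ_rpow_mul (μ := μ.restrict A)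
          (hG.comp measurable_prodMk_right).aemeasurable hr
    _ = μ A ^ (1 - 1 / r) * ∫⁻ t in I, K t ^ (1 / r) ∂ν :=
        lintegral_const_mul _ (hK.pow_const _)
    _ ≤ μ A ^ (1 - 1 / r) *
          (ν I ^ (1 - 1 / q) * (∫⁻ t in I, (K t ^ (1 / r)) ^ q ∂ν) ^ (1 / q)) := by
        gcongr
        simpa using lintegral_le_measure_univ_rpow_mul (μ := ν.restrict I)
          (hK.pow_const (1 / r)).aemeasurable hq
    _ = _ := by
        simp_rw [← ENNReal.rpow_mul, one_div_mul_eq_div, mul_assoc]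
        rfl

theorem tsum_mixedLIntegral_restrict_rpow_le {ι κ : Type*} [Countable ι] [Countable κ]
    {A : ι → Set α} {I : κ → Set β} (hA : ∀ m, NullMeasurableSet (A m) μ)
    (hAd : Pairwise (AEDisjoint μ on A)) (hI : ∀ k, NullMeasurableSet (I k) ν)
    (hId : Pairwise (AEDisjoint ν on I)) (hG : Measurable G) (hq0 : 0 < q) (hq2 : q ≤ 2)
    (hr0 : 0 < r) (hr2 : r ≤ 2) :
    ∑' l : ι × κ, mixedLIntegral (μ.restrict (A l.1)) (ν.restrict (I l.2)) q r G ^ (2 / q) ≤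
      mixedLIntegral μ ν q r G ^ (2 / q) := by
  set K := fun m t => ∫⁻ x in A m, G (x, t) ^ r ∂μ
  have hK : ∀ m, Measurable (K m) := fun m => (hG.pow_const r).lintegral_prod_left'
  have h2q : 1 ≤ 2 / q := (one_le_div hq0).mpr hq2
  have h2r : 1 ≤ 2 / r := (one_le_div hr0).mpr hr2
  calc ∑' l : ι × κ, mixedLIntegral (μ.restrict (A l.1)) (ν.restrict (I l.2)) q r G ^ (2 / q)
        = ∑' m, ∑' k, (∫⁻ t in I k, K m t ^ (q / r) ∂ν) ^ (2 / q) := ENNReal.tsum_prod'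
    _ ≤ ∑' m, (∫⁻ t, K m t ^ (q / r) ∂ν) ^ (2 / q) :=
        ENNReal.tsum_le_tsum fun m => tsum_setLIntegral_rpow_le hI hId _ h2q
    _ ≤ (∫⁻ t, (∑' m, (K m t ^ (q / r)) ^ (2 / q)) ^ (1 / (2 / q)) ∂ν) ^ (2 / q) :=
        tsum_lintegral_rpow_le (fun m => ((hK m).pow_const _).aemeasurable) h2q
    _ ≤ mixedLIntegral μ ν q r G ^ (2 / q) := by
        refine ENNReal.rpow_le_rpow (lintegral_mono fun t => ?_) (by positivity)
        calc (∑' m, (K m t ^ (q / r)) ^ (2 / q)) ^ (1 / (2 / q))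
            = (∑' m, K m t ^ (2 / r)) ^ (q / 2) := by
              have e : q / r * (2 / q) = 2 / r := by field_simp
              simp_rw [← ENNReal.rpow_mul, e, one_div_div]
          _ ≤ ((∫⁻ x, G (x, t) ^ r ∂μ) ^ (2 / r)) ^ (q / 2) := by
              gcongr
              exact tsum_setLIntegral_rpow_le hA hAd _ h2r
          _ = (∫⁻ x, G (x, t) ^ r ∂μ) ^ (q / r) := by
              rw [← ENNReal.rpow_mul]
              congr 1
              field_simp

theorem tsum_sq_setLIntegral_prod_le [SFinite ν] {ι κ : Type*} [Countable ι] [Countable κ]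
    {A : ι → Set α} {I : κ → Set β} (hA : ∀ m, NullMeasurableSet (A m) μ)
    (hAd : Pairwise (AEDisjoint μ on A)) (hI : ∀ k, NullMeasurableSet (I k) ν)
    (hId : Pairwise (AEDisjoint ν on I)) {a b : ℝ≥0∞} (ha : ∀ m, μ (A m) ≤ a)
    (hb : ∀ k, ν (I k) ≤ b) (hG : Measurable G) (hq1 : 1 ≤ q) (hq2 : q ≤ 2) (hr1 : 1 ≤ r)
    (hr2 : r ≤ 2) :
    (∑' l : ι × κ, (∫⁻ z in A l.1 ×ˢ I l.2, G z ∂μ.prod ν) ^ 2) ^ (1 / 2 : ℝ) ≤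
      a ^ (1 - 1 / r) * b ^ (1 - 1 / q) * mixedLIntegral μ ν q r G ^ (1 / q) := by
  set c := a ^ (1 - 1 / r) * b ^ (1 - 1 / q) with hc
  have hexp : ∀ {p : ℝ}, 1 ≤ p → 0 ≤ 1 - 1 / p := fun hp => by
    rw [sub_nonneg, div_le_one (by linarith)]; exact hp
  have hvol (l : ι × κ) : μ (A l.1) ^ (1 - 1 / r) * ν (I l.2) ^ (1 - 1 / q) ≤ c := by
    rw [hc]
    gcongr
    exacts [hexp hr1, ha _, hexp hq1, hb _]
  have hcube (l : ι × κ) : (∫⁻ z in A l.1 ×ˢ I l.2, G z ∂μ.prod ν) ^ 2 ≤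
      c ^ 2 * mixedLIntegral (μ.restrict (A l.1)) (ν.restrict (I l.2)) q r G ^ (2 / q) := by
    calc (∫⁻ z in A l.1 ×ˢ I l.2, G z ∂μ.prod ν) ^ 2
        ≤ (c * mixedLIntegral (μ.restrict (A l.1)) (ν.restrict (I l.2)) q r G ^ (1 / q)) ^ 2 :=
          by
          gcongr
          refine (setLIntegral_prod_le_mixedLIntegral hG hq1 hr1 _ _).trans ?_
          gcongr
          exact hvol l
      _ = c ^ 2 * mixedLIntegral (μ.restrict (A l.1)) (ν.restrict (I l.2)) q r G ^ (2 / q) := by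
          rw [mul_pow, ← ENNReal.rpow_mul_natCast]
          congr 2
          push_cast
          ring
  calc (∑' l : ι × κ, (∫⁻ z in A l.1 ×ˢ I l.2, G z ∂μ.prod ν) ^ 2) ^ (1 / 2 : ℝ)
      ≤ (c ^ 2 * mixedLIntegral μ ν q r G ^ (2 / q)) ^ (1 / 2 : ℝ) := by
        gcongr
        calc _ ≤ ∑' l : ι × κ, c ^ 2 *
              mixedLIntegral (μ.restrict (A l.1)) (ν.restrict (I l.2)) q r G ^ (2 / q) :=
              ENNReal.tsum_le_tsum hcube
          _ ≤ c ^ 2 * mixedLIntegral μ ν q r G ^ (2 / q) := by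
              rw [ENNReal.tsum_mul_left]
              gcongr
              exact tsum_mixedLIntegral_restrict_rpow_le hA hAd hI hId hG (by linarith) hq2
                (by linarith) hr2
    _ = c * mixedLIntegral μ ν q r G ^ (1 / q) := by
        rw [ENNReal.mul_rpow_of_nonneg _ _ (by norm_num), ← ENNReal.rpow_natCast,
          ← ENNReal.rpow_mul, ← ENNReal.rpow_mul]
        norm_num [div_mul_eq_mul_div]

end MixedLIntegral

theorem cube_eq_preimage_pi (n : ℕ) (c : EuclideanSpace ℝ (Fin n)) (s : ℝ) :
    cube n c s = (MeasurableEquiv.toLp 2 (Fin n → ℝ)).symm ⁻¹'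
      Set.univ.pi fun i => Set.Icc (c i - s / 2) (c i + s / 2) := by
  ext x
  simp only [cube, Set.mem_preimage, Set.mem_univ_pi, Set.mem_Icc, Set.mem_ofPred_eq,
    MeasurableEquiv.toLp_symm_apply, abs_sub_le_iff]
  exact forall_congr' fun i => by constructor <;> rintro ⟨h1, h2⟩ <;> constructor <;> linarith

theorem measurableSet_cube (n : ℕ) (c : EuclideanSpace ℝ (Fin n)) (s : ℝ) :
    MeasurableSet (cube n c s) := by
  rw [cube_eq_preimage_pi]
  exact (MeasurableEquiv.toLp 2 (Fin n → ℝ)).symm.measurable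
    (MeasurableSet.univ_pi fun i => measurableSet_Icc)

theorem volume_cube (n : ℕ) (c : EuclideanSpace ℝ (Fin n)) (s : ℝ) :
    volume (cube n c s) = ENNReal.ofReal s ^ n := by
  rw [cube_eq_preimage_pi,
    (EuclideanSpace.volume_preserving_symm_measurableEquiv_toLp (Fin n)).measure_preimage_equiv,
    volume_pi_pi]
  simp [Real.volume_Icc]

theorem pairwise_aedisjoint_Icc_grid {s : ℝ} (hs : 0 ≤ s) :
    Pairwise (AEDisjoint volume on fun k : ℤ => Set.Icc (s * k - s / 2) (s * k + s / 2)) := by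
  intro a b hab
  wlog h : a < b generalizing a b
  · exact (this hab.symm (hab.lt_or_gt.resolve_left h)).symm
  have hgap : s * a + s / 2 ≤ s * b - s / 2 := by
    have : (a : ℝ) + 1 ≤ b := by exact_mod_cast h
    nlinarith
  rw [Function.onFun, AEDisjoint, Set.Icc_inter_Icc, Real.volume_Icc, ENNReal.ofReal_eq_zero]
  linarith [min_le_left (s * a + s / 2) (s * b + s / 2),
    le_max_right (s * a - s / 2) (s * b - s / 2)]

theorem pairwise_aedisjoint_cube_grid (n : ℕ) {s : ℝ} (hs : 0 ≤ s) :
    Pairwise (AEDisjoint volume on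
      fun m : Fin n → ℤ => cube n (WithLp.toLp 2 fun i => s * m i) s) := by
  intro m m' hm
  obtain ⟨i, hi⟩ := Function.ne_iff.mp hm
  rw [Function.onFun, AEDisjoint, cube_eq_preimage_pi, cube_eq_preimage_pi, ← Set.preimage_inter,
    ← Set.pi_inter_distrib,
    (EuclideanSpace.volume_preserving_symm_measurableEquiv_toLp (Fin n)).measure_preimage_equiv,
    volume_pi_pi]
  exact Finset.prod_eq_zero (Finset.mem_univ i) (pairwise_aedisjoint_Icc_grid hs hi)

theorem mixedLIntegral_rpow_le_mixedNorm {n : ℕ} {q r : ℝ} (hq : 0 < q) (hr : 0 < r)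
    {F : EuclideanSpace ℝ (Fin n) × ℝ → ℂ} {G : EuclideanSpace ℝ (Fin n) × ℝ → ℝ≥0∞}
    (hGF : G ≤ fun z => (‖F z‖₊ : ℝ≥0∞)) :
    mixedLIntegral volume volume q r G ^ (1 / q) ≤ mixedNorm n q r F := by
  refine ENNReal.rpow_le_rpow (lintegral_mono fun t => ?_) (by positivity)
  rw [← ENNReal.rpow_mul, one_div_mul_eq_div]
  gcongr with x
  exact hGF _

/-- For `1 ≤ q, r ≤ 2`:
`(Σ_λ ‖Fχ_{Q_λ}‖₁²)^{1/2} ≤ C 2^{j(n/r′ + 1/q′)} ‖F‖_{L^q_t L^r_x}`, where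
`n/r′ + 1/q′ = n(1 − 1/r) + (1 − 1/q)`. -/
theorem sum_cube_L1_mixed (n : ℕ) (q r : ℝ) (hq1 : 1 ≤ q) (hq2 : q ≤ 2)
    (hr1 : 1 ≤ r) (hr2 : r ≤ 2) :
    ∃ C > (0:ℝ), ∀ (j : ℕ) (F : EuclideanSpace ℝ (Fin n) × ℝ → ℂ),
      (∑' l : (Fin n → ℤ) × ℤ,
          (∫⁻ z in gridCube n j l ((2 : ℝ) ^ j), (‖F z‖₊ : ℝ≥0∞)) ^ 2) ^ (1 / 2 : ℝ) ≤
        ENNReal.ofReal C *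
          ENNReal.ofReal ((2 : ℝ) ^ ((j : ℝ) * ((n : ℝ) * (1 - 1 / r) + (1 - 1 / q)))) *
          mixedNorm n q r F := by
  refine ⟨1, one_pos, fun j F => ?_⟩
  have hs : (0 : ℝ) < 2 ^ j := by positivity
  obtain ⟨G, hG, hGF, hGint⟩ :=
    exists_measurable_le_forall_setLIntegral_eq (μ := volume) fun z => (‖F z‖₊ : ℝ≥0∞)
  have hIcc (k : ℤ) : volume (Set.Icc ((2 : ℝ) ^ j * k - 2 ^ j / 2) (2 ^ j * k + 2 ^ j / 2)) =
      ENNReal.ofReal (2 ^ j) := by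
    rw [Real.volume_Icc]; ring_nf
  have hgrid := tsum_sq_setLIntegral_prod_le (μ := volume) (ν := volume)
    (fun m => (measurableSet_cube n _ _).nullMeasurableSet) (pairwise_aedisjoint_cube_grid n hs.le)
    (fun k => measurableSet_Icc.nullMeasurableSet) (pairwise_aedisjoint_Icc_grid hs.le)
    (fun m => (volume_cube n _ _).le) (fun k => (hIcc k).le) hG hq1 hq2 hr1 hr2
  rw [← Measure.volume_eq_prod] at hgrid
  have hconst : (ENNReal.ofReal (2 ^ j) ^ n) ^ (1 - 1 / r) * ENNReal.ofReal (2 ^ j) ^ (1 - 1 / q) =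
      ENNReal.ofReal ((2 : ℝ) ^ ((j : ℝ) * ((n : ℝ) * (1 - 1 / r) + (1 - 1 / q)))) := by
    rw [← ENNReal.rpow_natCast, ← ENNReal.rpow_mul,
      ← ENNReal.rpow_add _ _ (ENNReal.ofReal_pos.mpr hs).ne' ENNReal.ofReal_ne_top,
      ENNReal.ofReal_rpow_of_pos hs, ← Real.rpow_natCast, ← Real.rpow_mul zero_le_two]
  simp_rw [hGint, ENNReal.ofReal_one, one_mul, ← hconst]
  refine hgrid.trans ?_
  gcongr
  exact mixedLIntegral_rpow_le_mixedNorm (by linarith) (by linarith) hGF
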